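/- Let P, Q be orthogonal projections with principal vectors u_k, v_k satisfying P u_k = u_k, Q v_k = v_k, P v_k = (cos θ_k) u_k, Q u_k = (cos θ_k) v_k, with θ_k ∈ (0,π/2). Then u_k − e^{−iθ_k} v_k is an eigenvector of the commutator PQ − QP with eigenvalue i sin θ_k cos θ_k, and u_k − e^{iθ_k} v_k is an eigenvector of PQ − QP with eigenvalue −i sin θ_k cos θ_k. -/

import Mathlib

open scoped ComplexInnerProductSpace

/-- The orthogonal projection onto a subspace `K` of `ℂⁿ`, as an operator on `ℂⁿ`. -/
noncomputable def projCLM {n : ℕ} (K : Submodule ℂ (EuclideanSpace ℂ (Fin n))) :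
    EuclideanSpace ℂ (Fin n) →L[ℂ] EuclideanSpace ℂ (Fin n) :=
  K.subtypeL.comp K.orthogonalProjection

/-- For orthogonal projections `P = P_M`, `Q = P_N` and principal vectors `u, v`
with angle `θ ∈ (0, π/2)`: `u - e^{-iθ} v` is an eigenvector of the commutator
`PQ - QP` with eigenvalue `i sin θ cos θ`, and `u - e^{iθ} v` is an eigenvector
with eigenvalue `-i sin θ cos θ`. -/
theorem eigen_commutator_projections {n : ℕ}
    (M N : Submodule ℂ (EuclideanSpace ℂ (Fin n)))
    (u v : EuclideanSpace ℂ (Fin n)) (θ : ℝ) (hθ : θ ∈ Set.Ioo 0 (Real.pi / 2))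
    (hu : u ∈ M) (hv : v ∈ N) (hun : ‖u‖ = 1) (hvn : ‖v‖ = 1)
    (huv : ⟪u, v⟫ = (Real.cos θ : ℂ))
    (hPv : projCLM M v = (Real.cos θ : ℂ) • u)
    (hQu : projCLM N u = (Real.cos θ : ℂ) • v) :
    (u - Complex.exp (-(θ : ℂ) * Complex.I) • v ≠ 0 ∧
      ((projCLM M).comp (projCLM N) - (projCLM N).comp (projCLM M))
          (u - Complex.exp (-(θ : ℂ) * Complex.I) • v) =
        (Complex.I * Real.sin θ * Real.cos θ) •
          (u - Complex.exp (-(θ : ℂ) * Complex.I) • v)) ∧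
    (u - Complex.exp ((θ : ℂ) * Complex.I) • v ≠ 0 ∧
      ((projCLM M).comp (projCLM N) - (projCLM N).comp (projCLM M))
          (u - Complex.exp ((θ : ℂ) * Complex.I) • v) =
        (-(Complex.I * Real.sin θ * Real.cos θ)) •
          (u - Complex.exp ((θ : ℂ) * Complex.I) • v)) := by
  have hPu : projCLM M u = u := Submodule.starProjection_eq_self_iff.mpr hu
  have hQv : projCLM N v = v := Submodule.starProjection_eq_self_iff.mpr hv
  have hsin : Real.sin θ ≠ 0 := ne_of_gt (Real.sin_pos_of_pos_of_lt_pi hθ.1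
    (lt_trans hθ.2 (by linarith [Real.pi_pos])))
  have hc1 : Complex.exp (-(θ : ℂ) * Complex.I)
      = (Real.cos θ : ℂ) - Complex.I * Real.sin θ := by
    rw [Complex.exp_mul_I]
    simp [← Complex.ofReal_cos, ← Complex.ofReal_sin]
    ring
  have hc2 : Complex.exp ((θ : ℂ) * Complex.I)
      = (Real.cos θ : ℂ) + Complex.I * Real.sin θ := by
    rw [Complex.exp_mul_I]
    simp [← Complex.ofReal_cos, ← Complex.ofReal_sin]
    ring
  have key : ∀ c : ℂ, ((projCLM M).comp (projCLM N) - (projCLM N).comp (projCLM M))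
      (u - c • v) = ((Real.cos θ : ℂ) * ((Real.cos θ : ℂ) - c)) • u
        - ((Real.cos θ : ℂ) * (1 - c * (Real.cos θ : ℂ))) • v := by
    intro c
    simp only [ContinuousLinearMap.sub_apply, ContinuousLinearMap.comp_apply,
      map_sub, map_smul, hPu, hQv, hPv, hQu]
    module
  have hpy : (Real.sin θ : ℂ)^2 + (Real.cos θ : ℂ)^2 = 1 := by
    push_cast [← Complex.ofReal_pow]
    exact_mod_cast Real.sin_sq_add_cos_sq θ
  have hvv : ⟪v, v⟫ = (1 : ℂ) := by
    rw [inner_self_eq_norm_sq_to_K, hvn]; norm_num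
  have hnz : ∀ c : ℂ, (starRingEnd ℂ) c ≠ (Real.cos θ : ℂ) → u - c • v ≠ 0 := by
    intro c hne h
    apply hne
    have he : u = c • v := sub_eq_zero.mp h
    rw [← huv, he, inner_smul_left, hvv, mul_one]
  have hIs : Complex.I * (Real.sin θ : ℂ) ≠ 0 := by
    intro h'
    rcases mul_eq_zero.mp h' with h'' | h''
    · exact Complex.I_ne_zero h''
    · exact hsin (by exact_mod_cast h'')
  refine ⟨⟨hnz _ ?_, ?_⟩, ⟨hnz _ ?_, ?_⟩⟩
  · rw [hc1]
    simp only [map_sub, map_mul, Complex.conj_I, Complex.conj_ofReal]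
    intro h
    exact hIs (by linear_combination h)
  · rw [key, hc1, smul_sub]
    match_scalars
    · ring
    · simp only [← Complex.ofReal_cos, ← Complex.ofReal_sin]
      linear_combination (-((Real.cos θ : ℂ) * (Real.sin θ : ℂ)^2)) * Complex.I_sq
        + (Real.cos θ : ℂ) * hpy
  · rw [hc2]
    simp only [map_add, map_mul, Complex.conj_I, Complex.conj_ofReal]
    intro h
    exact hIs (by linear_combination -h)
  · rw [key, hc2, smul_sub]
    match_scalars
    · ring
    · simp only [← Complex.ofReal_cos, ← Complex.ofReal_sin]
      linear_combination (-((Real.cos θ : ℂ) * (Real.sin θ : ℂ)^2)) * Complex.I_sq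
        + (Real.cos θ : ℂ) * hpy
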